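/- arXiv:2511.09102 — 2 statements merged into one kernel-verified Lean document; each statement's English description precedes it below -/
import Mathlib

section
/- Conversely, if the SEO are incoherent, i.e., B_{a|x} = ∑_i β_{i|(a,x)} |i⟩⟨i| for some orthonormal basis {|i⟩} and coefficients 0 ≤ β_{i|(a,x)} ≤ 1, then the state assemblage admits the LHS decomposition σ_{a|x} = ∑_i β_{i|(a,x)} σ_i with σ_i = ρ_B^{1/2} |i⟩⟨i| ρ_B^{1/2}; each σ_i is positive semidefinite and ∑_i σ_i = ρ_B. -/
open Matrix Kronecker
open scoped ComplexOrder ENNReal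

/-- Singular values of a complex square matrix: square roots of eigenvalues of `Aᴴ * A`. -/
noncomputable def singularValues {d : ℕ} (A : Matrix (Fin d) (Fin d) ℂ) (i : Fin d) : ℝ :=
  Real.sqrt ((Matrix.isHermitian_conjTranspose_mul_self A).eigenvalues i)

/-- The square root of a positive semidefinite matrix, as `Matrix.PosSemidef.sqrt` was
defined in the older Mathlib (since removed there). -/
noncomputable def Matrix.PosSemidef.sqrt {n 𝕜 : Type*} [Fintype n] [DecidableEq n] [RCLike 𝕜]
    {A : Matrix n n 𝕜} (hA : A.PosSemidef) : Matrix n n 𝕜 :=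
  hA.1.eigenvectorUnitary.1 * diagonal ((↑) ∘ (√·) ∘ hA.1.eigenvalues) *
    (star hA.1.eigenvectorUnitary : Matrix n n 𝕜)

/-- Schatten `p`-norm of a complex square matrix. -/
noncomputable def schattenNorm {d : ℕ} (p : ℝ≥0∞) (A : Matrix (Fin d) (Fin d) ℂ) : ℝ :=
  if p = ⊤ then ⨆ i, singularValues A i
  else (∑ i, (singularValues A i) ^ p.toReal) ^ (1 / p.toReal)

/-- Commutator of matrices. -/
noncomputable def mcomm {d : ℕ} (A B : Matrix (Fin d) (Fin d) ℂ) : Matrix (Fin d) (Fin d) ℂ :=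
  A * B - B * A

/-- Partial trace over the first (A) tensor factor. -/
noncomputable def ptraceA {dA dB : ℕ} (ρ : Matrix (Fin dA × Fin dB) (Fin dA × Fin dB) ℂ) :
    Matrix (Fin dB) (Fin dB) ℂ :=
  fun j j' => ∑ i, ρ (i, j) (i, j')

/-! Conjugating the incoherent SEO `ρ_B^{-1/2} σ_{a|x} ρ_B^{-1/2} = ∑ᵢ β_{i|(a,x)} |i⟩⟨i|` back by
`ρ_B^{1/2}` gives the decomposition. Each `σ_i` is a congruence of a rank-one projector, hence PSD,
and the `σ_i` sum to `ρ_B^{1/2} ρ_B^{1/2} = ρ_B` because the orthonormal basis resolves the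
identity, `∑ᵢ |i⟩⟨i| = 1` (a square matrix with orthonormal columns is unitary). -/

namespace Matrix

variable {n : Type*} [Fintype n] [DecidableEq n]

theorem sum_vecMulVec_star_self_eq_one {R : Type*} [CommRing R] [StarRing R] (v : n → n → R)
    (hv : ∀ i j, star (v i) ⬝ᵥ v j = if i = j then 1 else 0) :
    ∑ i, vecMulVec (v i) (star (v i)) = 1 := by
  set U : Matrix n n R := (of v)ᵀ
  have hUU : Uᴴ * U = 1 := by
    ext i j
    simpa [U, mul_apply, one_apply, dotProduct] using hv i j
  have hsum : U * Uᴴ = ∑ i, vecMulVec (v i) (star (v i)) := by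
    ext k l
    simp [U, mul_apply, sum_apply, vecMulVec_apply]
  rw [← hsum, mul_eq_one_comm.mp hUU]

theorem eq_mul_mul_of_inv_mul_mul_inv_eq {R : Type*} [CommRing R] {S M N : Matrix n n R}
    (hS : IsUnit S) (h : S⁻¹ * M * S⁻¹ = N) : M = S * N * S := by
  have hdet := (isUnit_iff_isUnit_det S).mp hS
  simp [← h, mul_assoc, nonsing_inv_mul _ hdet, ← mul_assoc S S⁻¹, mul_nonsing_inv _ hdet]

section RCLike

variable {𝕜 : Type*} [RCLike 𝕜]

theorem PosSemidef.isHermitian_sqrt {A : Matrix n n 𝕜} (hA : A.PosSemidef) :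
    hA.sqrt.IsHermitian :=
  isHermitian_mul_mul_conjTranspose _ <| isHermitian_diagonal_iff.mpr fun i => by
    simp [isSelfAdjoint_iff]

theorem PosSemidef.sqrt_mul_self {A : Matrix n n 𝕜} (hA : A.PosSemidef) :
    hA.sqrt * hA.sqrt = A := by
  have hD : diagonal ((↑) ∘ (√·) ∘ hA.1.eigenvalues) * diagonal ((↑) ∘ (√·) ∘ hA.1.eigenvalues)
      = diagonal (RCLike.ofReal ∘ hA.1.eigenvalues : n → 𝕜) := by
    rw [diagonal_mul_diagonal]
    congr 1
    funext i
    simp [← RCLike.ofReal_mul, Real.mul_self_sqrt (hA.eigenvalues_nonneg i)]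
  conv_rhs => rw [hA.1.spectral_theorem, ← hD, map_mul]
  rfl

theorem PosDef.isUnit_sqrt {A : Matrix n n 𝕜} (hA : A.PosDef) : IsUnit hA.posSemidef.sqrt :=
  isUnit_of_mul_isUnit_left (hA.posSemidef.sqrt_mul_self ▸ hA.isUnit)

theorem PosSemidef.sqrt_mul_mul_sqrt {A P : Matrix n n 𝕜} (hA : A.PosSemidef)
    (hP : P.PosSemidef) : (hA.sqrt * P * hA.sqrt).PosSemidef := by
  simpa only [hA.isHermitian_sqrt.eq] using hP.mul_mul_conjTranspose_same hA.sqrt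

end RCLike

end Matrix

theorem stmt3_general {d : ℕ} {A X : Type*}
    (ρB : Matrix (Fin d) (Fin d) ℂ) (hρ : ρB.PosDef)
    (σ : A → X → Matrix (Fin d) (Fin d) ℂ)
    (v : Fin d → Fin d → ℂ)
    (hortho : ∀ i j, dotProduct (star (v i)) (v j) = if i = j then 1 else 0)
    (β : A → X → Fin d → ℝ)
    (hSEO : ∀ a x, hρ.posSemidef.sqrt⁻¹ * σ a x * hρ.posSemidef.sqrt⁻¹
        = ∑ i, (β a x i : ℂ) • Matrix.vecMulVec (v i) (star (v i))) :
    (∀ a x, σ a x = ∑ i, (β a x i : ℂ) •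
        (hρ.posSemidef.sqrt * Matrix.vecMulVec (v i) (star (v i)) * hρ.posSemidef.sqrt)) ∧
    (∀ i, (hρ.posSemidef.sqrt * Matrix.vecMulVec (v i) (star (v i)) * hρ.posSemidef.sqrt).PosSemidef) ∧
    (∑ i, hρ.posSemidef.sqrt * Matrix.vecMulVec (v i) (star (v i)) * hρ.posSemidef.sqrt = ρB) := by
  set S := hρ.posSemidef.sqrt
  set P : Fin d → Matrix (Fin d) (Fin d) ℂ := fun i => vecMulVec (v i) (star (v i))
  refine ⟨fun a x => ?_, fun i => hρ.posSemidef.sqrt_mul_mul_sqrt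
    (posSemidef_vecMulVec_self_star (v i)), ?_⟩
  · calc σ a x = S * (∑ i, (β a x i : ℂ) • P i) * S :=
          eq_mul_mul_of_inv_mul_mul_inv_eq hρ.isUnit_sqrt (hSEO a x)
      _ = ∑ i, (β a x i : ℂ) • (S * P i * S) := by
          simp only [Finset.mul_sum, Finset.sum_mul, Matrix.mul_smul, Matrix.smul_mul]
  · calc ∑ i, S * P i * S = S * (∑ i, P i) * S := by rw [Finset.mul_sum, Finset.sum_mul]
      _ = ρB := by rw [sum_vecMulVec_star_self_eq_one v hortho, mul_one,
          hρ.posSemidef.sqrt_mul_self]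

/-- if the SEO are incoherent, `B_{a|x} = ∑_i β_{i|(a,x)} |i⟩⟨i|` with
`0 ≤ β ≤ 1`, then `σ_{a|x} = ∑_i β_{i|(a,x)} σ_i` with `σ_i = ρ_B^{1/2}|i⟩⟨i|ρ_B^{1/2}`;
each `σ_i` is PSD and `∑_i σ_i = ρ_B`. -/
theorem stmt3 {d : ℕ} {A X : Type*} [Fintype A]
    (ρB : Matrix (Fin d) (Fin d) ℂ) (hρ : ρB.PosDef) (htr : ρB.trace = 1)
    (σ : A → X → Matrix (Fin d) (Fin d) ℂ) (hsum : ∀ x, ∑ a, σ a x = ρB)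
    (v : Fin d → Fin d → ℂ)
    (hortho : ∀ i j, dotProduct (star (v i)) (v j) = if i = j then 1 else 0)
    (β : A → X → Fin d → ℝ) (hβ0 : ∀ a x i, 0 ≤ β a x i) (hβ1 : ∀ a x i, β a x i ≤ 1)
    (hSEO : ∀ a x, hρ.posSemidef.sqrt⁻¹ * σ a x * hρ.posSemidef.sqrt⁻¹
        = ∑ i, (β a x i : ℂ) • Matrix.vecMulVec (v i) (star (v i))) :
    (∀ a x, σ a x = ∑ i, (β a x i : ℂ) •
        (hρ.posSemidef.sqrt * Matrix.vecMulVec (v i) (star (v i)) * hρ.posSemidef.sqrt)) ∧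
    (∀ i, (hρ.posSemidef.sqrt * Matrix.vecMulVec (v i) (star (v i)) * hρ.posSemidef.sqrt).PosSemidef) ∧
    (∑ i, hρ.posSemidef.sqrt * Matrix.vecMulVec (v i) (star (v i)) * hρ.posSemidef.sqrt = ρB) :=
  stmt3_general ρB hρ σ v hortho β hSEO
end

section
/- Suppose for each μ the guessing probability satisfies p_g^{(μ)} ≤ (1 + cos θ_μ)/2 and the steerability witness satisfies S_Υ^{(μ)} ≤ sin θ_μ with θ_μ ∈ [0, π/2], and suppose the total witness obeys convexity S_Υ ≤ ∑_μ q_μ S_Υ^{(μ)} for a probability distribution {q_μ}. Then the average guessing probability p_g = ∑_μ q_μ p_g^{(μ)} satisfies p_g ≤ (1/2)(1 + √(1 − S_Υ²)). -/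
open Matrix Kronecker
open scoped ComplexOrder ENNReal

/-! Since `cos θ ≤ |cos θ| = √(1 - sin² θ)` and `x ↦ √(1 - x²)` is antitone on `[0, ∞)`, each
`p_g^{(μ)}` is at most `(1 + √(1 - (S^{(μ)})²)) / 2`. Averaging over `μ`, Jensen's inequality for
the concave function `x ↦ √(1 - x²)` on `[-1, 1]` and antitonicity once more
(`0 ≤ S ≤ ∑ q_μ S^{(μ)}`) give the bound. -/

open Real Finset

theorem concaveOn_sqrt_one_sub_sq :
    ConcaveOn ℝ (Set.Icc (-1) 1) (fun x : ℝ => √(1 - x ^ 2)) := by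
  have hinner : ConcaveOn ℝ (Set.Icc (-1) 1) (fun x : ℝ => 1 - x ^ 2) :=
    (concaveOn_const 1 (convex_Icc _ _)).sub
      (even_two.convexOn_pow.subset (Set.subset_univ _) (convex_Icc _ _))
  have himage : (fun x : ℝ => 1 - x ^ 2) '' Set.Icc (-1) 1 ⊆ Set.Ici 0 := by
    rintro _ ⟨x, hx, rfl⟩
    simpa only [Set.mem_Ici, sub_nonneg, sq_le_one_iff_abs_le_one, abs_le] using Set.mem_Icc.1 hx
  have hconvex : Convex ℝ ((fun x : ℝ => 1 - x ^ 2) '' Set.Icc (-1) 1) :=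
    convex_iff_isPreconnected.2 (isPreconnected_Icc.image _ (by fun_prop))
  exact (strictConcaveOn_sqrt.concaveOn.subset himage hconvex).comp hinner
    (Real.sqrt_monotone.monotoneOn _)

theorem antitoneOn_sqrt_one_sub_sq : AntitoneOn (fun x : ℝ => √(1 - x ^ 2)) (Set.Ici 0) :=
  fun _ hx _ _ hxy => Real.sqrt_le_sqrt (by gcongr)

theorem cos_le_sqrt_one_sub_sin_sq (θ : ℝ) : cos θ ≤ √(1 - sin θ ^ 2) :=
  abs_cos_eq_sqrt_one_sub_sin_sq θ ▸ le_abs_self _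

theorem stmt16_general {I : Type*} [Fintype I] (q : I → ℝ) (hq : ∀ μ, 0 ≤ q μ) (hq1 : ∑ μ, q μ = 1)
    (θ : I → ℝ)
    (pg : I → ℝ)
    (hpg : ∀ μ, pg μ ≤ (1 + Real.cos (θ μ)) / 2)
    (Sμ : I → ℝ) (hSμ0 : ∀ μ, 0 ≤ Sμ μ) (hSμ : ∀ μ, Sμ μ ≤ Real.sin (θ μ))
    (S : ℝ) (hS0 : 0 ≤ S) (hS : S ≤ ∑ μ, q μ * Sμ μ) :
    ∑ μ, q μ * pg μ ≤ (1 / 2) * (1 + Real.sqrt (1 - S ^ 2)) := by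
  set g : ℝ → ℝ := fun x => √(1 - x ^ 2)
  have hpointwise (μ : I) : pg μ ≤ (1 + g (Sμ μ)) / 2 := by
    have := antitoneOn_sqrt_one_sub_sq (hSμ0 μ) ((hSμ0 μ).trans (hSμ μ)) (hSμ μ)
    linarith [hpg μ, cos_le_sqrt_one_sub_sin_sq (θ μ)]
  have hjensen : ∑ μ, q μ * g (Sμ μ) ≤ g (∑ μ, q μ * Sμ μ) :=
    concaveOn_sqrt_one_sub_sq.le_map_sum (fun μ _ => hq μ) hq1 fun μ _ =>
      ⟨by linarith [hSμ0 μ], (hSμ μ).trans (sin_le_one _)⟩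
  have hmono : g (∑ μ, q μ * Sμ μ) ≤ g S := antitoneOn_sqrt_one_sub_sq hS0 (hS0.trans hS) hS
  calc ∑ μ, q μ * pg μ ≤ ∑ μ, q μ * ((1 + g (Sμ μ)) / 2) :=
        sum_le_sum fun μ _ => mul_le_mul_of_nonneg_left (hpointwise μ) (hq μ)
    _ = (∑ μ, q μ + ∑ μ, q μ * g (Sμ μ)) / 2 := by
        rw [← sum_add_distrib, sum_div]
        congr 1 with μ
        ring
    _ ≤ (1 / 2) * (1 + g S) := by linarith

/-- combining `p_g^{(μ)} ≤ (1+cos θ_μ)/2`, `S_Υ^{(μ)} ≤ sin θ_μ` and convexity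
`S_Υ ≤ ∑ q_μ S_Υ^{(μ)}` yields `p_g = ∑ q_μ p_g^{(μ)} ≤ (1+√(1−S_Υ²))/2`. -/
theorem stmt16 {I : Type*} [Fintype I] (q : I → ℝ) (hq : ∀ μ, 0 ≤ q μ) (hq1 : ∑ μ, q μ = 1)
    (θ : I → ℝ) (hθ : ∀ μ, θ μ ∈ Set.Icc (0 : ℝ) (Real.pi / 2))
    (pg : I → ℝ) (hpg0 : ∀ μ, 0 ≤ pg μ)
    (hpg : ∀ μ, pg μ ≤ (1 + Real.cos (θ μ)) / 2)
    (Sμ : I → ℝ) (hSμ0 : ∀ μ, 0 ≤ Sμ μ) (hSμ : ∀ μ, Sμ μ ≤ Real.sin (θ μ))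
    (S : ℝ) (hS0 : 0 ≤ S) (hS : S ≤ ∑ μ, q μ * Sμ μ) :
    ∑ μ, q μ * pg μ ≤ (1 / 2) * (1 + Real.sqrt (1 - S ^ 2)) :=
  stmt16_general q hq hq1 θ pg hpg Sμ hSμ0 hSμ S hS0 hS
end
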